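/- In the center-restricted Picaria game, starting from the Loop configuration L with X to move, player X cannot win: (L, X) is not in WinningForRestricted X. (In the paper's formulation: if X is to move from a Loop position and refuses to leave the center, then O can force a return to the Loop position.) -/

import Mathlib

/-- The two players of Picaria. -/
inductive Player : Type
  | X : Player
  | O : Player
deriving DecidableEq

instance instFintypePlayer : Fintype Player :=
  ⟨{Player.X, Player.O}, fun x => by cases x <;> simp⟩

/-- The opponent of a player. -/
def Player.other : Player → Player
  | Player.X => Player.O
  | Player.O => Player.X

/-- A cell of the 3×3 board, written (row, column), 0-indexed. -/
abbrev Cell : Type := Fin 3 × Fin 3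

/-- A configuration assigns to each cell an optional stone. -/
abbrev Config : Type := Cell → Option Player

/-- King-move adjacency on the board: distinct cells whose coordinates
differ by at most 1 each. -/
def adjacent (a b : Cell) : Prop :=
  a ≠ b ∧ |((a.1 : ℕ) : ℤ) - ((b.1 : ℕ) : ℤ)| ≤ 1 ∧
    |((a.2 : ℕ) : ℤ) - ((b.2 : ℕ) : ℤ)| ≤ 1

/-- The 8 lines of the board: 3 rows, 3 columns, 2 main diagonals. -/
def lines : List (Cell × Cell × Cell) :=
  [((0,0),(0,1),(0,2)), ((1,0),(1,1),(1,2)), ((2,0),(2,1),(2,2)),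
   ((0,0),(1,0),(2,0)), ((0,1),(1,1),(2,1)), ((0,2),(1,2),(2,2)),
   ((0,0),(1,1),(2,2)), ((0,2),(1,1),(2,0))]

/-- Player `p` has three-in-a-row in configuration `c`. -/
def threeInARow (c : Config) (p : Player) : Prop :=
  ∃ l ∈ lines, c l.1 = some p ∧ c l.2.1 = some p ∧ c l.2.2 = some p

/-- The number of stones of player `p` on the board. -/
def stoneCount (c : Config) (p : Player) : ℕ :=
  (Finset.univ.filter fun x : Cell => c x = some p).card

/-- Legal moves of player `t` from configuration `c`, producing `c'`:
placement on an empty cell while `t` has fewer than 3 stones on the board;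
otherwise a slide of one of `t`'s stones to an adjacent empty cell. -/
def Move (t : Player) (c c' : Config) : Prop :=
  (stoneCount c t < 3 ∧ ∃ x : Cell, c x = none ∧ c' = Function.update c x (some t)) ∨
  (3 ≤ stoneCount c t ∧ ∃ x y : Cell, c x = some t ∧ c y = none ∧ adjacent x y ∧
    c' = Function.update (Function.update c x none) y (some t))

/-- `WinningFor p` is the least set of states (configuration, player to move) such that:
(i) `(c, p)` is winning for `p` if some legal move of `p` immediately makes a
three-in-a-row for `p`, or leads to a state winning for `p`;
(ii) `(c, q)` (for `q` the opponent of `p`) is winning for `p` if `q` has at least one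
legal move, and every legal move of `q` yields a configuration with no three-in-a-row
for `q` together with a state winning for `p`. -/
inductive WinningFor (p : Player) : Config × Player → Prop
  | moveWin (c c' : Config) (h : Move p c c') (hw : threeInARow c' p) :
      WinningFor p (c, p)
  | moveStep (c c' : Config) (h : Move p c c') (hw : WinningFor p (c', p.other)) :
      WinningFor p (c, p)
  | forced (c : Config) (hne : ∃ c', Move p.other c c')
      (hnowin : ∀ c', Move p.other c c' → ¬ threeInARow c' p.other)
      (hall : ∀ c', Move p.other c c' → WinningFor p (c', p)) :
      WinningFor p (c, p.other)

/-- The center cell of the board. -/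
def center : Cell := (1, 1)

/-- Legal moves in the center-restricted game: as in Picaria, except that X is
forbidden from sliding a stone occupying the center cell. -/
def MoveR (t : Player) (c c' : Config) : Prop :=
  (stoneCount c t < 3 ∧ ∃ x : Cell, c x = none ∧ c' = Function.update c x (some t)) ∨
  (3 ≤ stoneCount c t ∧ ∃ x y : Cell, c x = some t ∧ c y = none ∧ adjacent x y ∧
    ¬ (t = Player.X ∧ x = center) ∧
    c' = Function.update (Function.update c x none) y (some t))

/-- `WinningForRestricted p`: the least set of states from which player `p` can force
a win in the center-restricted game. -/
inductive WinningForRestricted (p : Player) : Config × Player → Prop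
  | moveWin (c c' : Config) (h : MoveR p c c') (hw : threeInARow c' p) :
      WinningForRestricted p (c, p)
  | moveStep (c c' : Config) (h : MoveR p c c') (hw : WinningForRestricted p (c', p.other)) :
      WinningForRestricted p (c, p)
  | forced (c : Config) (hne : ∃ c', MoveR p.other c c')
      (hnowin : ∀ c', MoveR p.other c c' → ¬ threeInARow c' p.other)
      (hall : ∀ c', MoveR p.other c c' → WinningForRestricted p (c', p)) :
      WinningForRestricted p (c, p.other)

/-- The Loop configuration. -/
def L : Config := fun x =>
  if x = ((0 : Fin 3), (2 : Fin 3)) then some Player.O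
  else if x = ((1 : Fin 3), (0 : Fin 3)) then some Player.O
  else if x = ((1 : Fin 3), (1 : Fin 3)) then some Player.X
  else if x = ((1 : Fin 3), (2 : Fin 3)) then some Player.X
  else if x = ((2 : Fin 3), (0 : Fin 3)) then some Player.X
  else if x = ((2 : Fin 3), (2 : Fin 3)) then some Player.O
  else none

/-- Evaluate a row-major list of 9 entries as a configuration. -/
def mk (l : List (Option Player)) : Config := fun x => l.getD (x.1.val * 3 + x.2.val) none

def upd (c : Config) (x y : Cell) (t : Player) : Config :=
  Function.update (Function.update c x none) y (some t)

def SX : List Config :=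
  [mk [none, none, some Player.O, some Player.O, some Player.X, some Player.X, some Player.X, none, some Player.O],
   mk [none, none, some Player.X, some Player.O, some Player.X, some Player.X, some Player.O, none, some Player.O],
   mk [none, none, some Player.X, some Player.X, some Player.X, some Player.O, some Player.O, none, some Player.O],
   mk [none, some Player.O, none, some Player.O, some Player.X, none, some Player.X, some Player.X, some Player.O],
   mk [none, some Player.O, none, some Player.O, some Player.X, some Player.X, none, some Player.X, some Player.O],
   mk [none, some Player.O, some Player.X, none, some Player.X, none, some Player.O, some Player.X, some Player.O],
   mk [none, some Player.X, some Player.O, none, some Player.X, none, some Player.X, some Player.O, some Player.O]]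
def SO : List Config :=
  [mk [none, none, some Player.O, none, some Player.X, some Player.X, some Player.X, some Player.O, some Player.O],
   mk [none, none, some Player.O, some Player.O, some Player.X, none, some Player.X, some Player.X, some Player.O],
   mk [none, none, some Player.O, some Player.O, some Player.X, some Player.X, none, some Player.X, some Player.O],
   mk [none, none, some Player.O, some Player.X, some Player.X, none, some Player.X, some Player.O, some Player.O],
   mk [none, none, some Player.X, none, some Player.X, some Player.O, some Player.O, some Player.X, some Player.O],
   mk [none, none, some Player.X, some Player.O, some Player.X, none, some Player.O, some Player.X, some Player.O],
   mk [none, some Player.O, none, none, some Player.X, some Player.X, some Player.O, some Player.X, some Player.O],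
   mk [none, some Player.O, none, some Player.O, some Player.X, some Player.X, some Player.X, none, some Player.O],
   mk [none, some Player.O, some Player.X, none, some Player.X, some Player.X, some Player.O, none, some Player.O],
   mk [none, some Player.O, some Player.X, some Player.O, some Player.X, none, none, some Player.X, some Player.O],
   mk [none, some Player.O, some Player.X, some Player.X, some Player.X, none, some Player.O, none, some Player.O],
   mk [none, some Player.X, none, some Player.O, some Player.X, some Player.X, some Player.O, none, some Player.O],
   mk [none, some Player.X, none, some Player.X, some Player.X, some Player.O, some Player.O, none, some Player.O],
   mk [none, some Player.X, some Player.O, some Player.O, some Player.X, none, some Player.X, none, some Player.O],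
   mk [none, some Player.X, some Player.O, some Player.X, some Player.X, none, none, some Player.O, some Player.O],
   mk [none, some Player.X, some Player.X, none, some Player.X, some Player.O, some Player.O, none, some Player.O],
   mk [none, some Player.X, some Player.X, some Player.O, some Player.X, none, some Player.O, none, some Player.O],
   mk [some Player.X, none, some Player.O, none, some Player.X, none, some Player.X, some Player.O, some Player.O],
   mk [some Player.X, none, some Player.X, none, some Player.X, some Player.O, some Player.O, none, some Player.O]]


instance (a b : Cell) : Decidable (adjacent a b) := by unfold adjacent; infer_instance

instance (c : Config) (p : Player) : Decidable (threeInARow c p) := by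
  unfold threeInARow; infer_instance

def cellsL : List Cell :=
  [(0,0),(0,1),(0,2),(1,0),(1,1),(1,2),(2,0),(2,1),(2,2)]

lemma cellsL_complete : ∀ x : Cell, x ∈ cellsL := by decide

def P (c : Config) : Prop := 3 ≤ stoneCount c Player.X ∧
  ∀ x ∈ cellsL, ∀ y ∈ cellsL, c x = some Player.X → c y = none → adjacent x y → x ≠ center →
    ¬ threeInARow (upd c x y Player.X) Player.X ∧ upd c x y Player.X ∈ SO

def Q (c : Config) : Prop := 3 ≤ stoneCount c Player.O ∧
  ∃ x ∈ cellsL, ∃ y ∈ cellsL, c x = some Player.O ∧ c y = none ∧ adjacent x y ∧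
    (threeInARow (upd c x y Player.O) Player.O ∨ upd c x y Player.O ∈ SX)

set_option maxRecDepth 20000 in
lemma hP : ∀ c ∈ SX, P c := by
  intro c hc
  simp only [SX, List.mem_cons, List.not_mem_nil, or_false] at hc
  rcases hc with rfl | rfl | rfl | rfl | rfl | rfl | rfl <;> (unfold P; decide)

set_option maxRecDepth 20000 in
lemma hQ : ∀ c ∈ SO, Q c := by
  intro c hc
  simp only [SO, List.mem_cons, List.not_mem_nil, or_false] at hc
  rcases hc with rfl | rfl | rfl | rfl | rfl | rfl | rfl | rfl | rfl | rfl | rfl | rfl | rfl |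
    rfl | rfl | rfl | rfl | rfl | rfl <;> (unfold Q; decide)

lemma hLmem : L ∈ SX := by
  have hL : L = mk [none, none, some Player.O, some Player.O, some Player.X, some Player.X, some Player.X, none, some Player.O] := by
    funext z; fin_cases z <;> rfl
  rw [hL, SX]
  exact List.Mem.head _

lemma key : ∀ s, WinningForRestricted Player.X s →
    ¬ ((s.2 = Player.X ∧ s.1 ∈ SX) ∨ (s.2 = Player.O ∧ s.1 ∈ SO)) := by
  intro s hw
  induction hw with
  | moveWin c c' hm hw3 =>
      rintro (⟨-, hc⟩ | ⟨h2, -⟩)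
      · rcases hm with ⟨hlt, -⟩ | ⟨-, x, y, hx, hy, hadj, hnc, he⟩
        · have := (hP c hc).1; omega
        · have hxc : x ≠ center := fun h' => hnc ⟨rfl, h'⟩
          have h3 := ((hP c hc).2 x (cellsL_complete x) y (cellsL_complete y)
            hx hy hadj hxc).1
          rw [he] at hw3
          exact h3 hw3
      · exact Player.noConfusion h2
  | moveStep c c' hm hw ih =>
      rintro (⟨-, hc⟩ | ⟨h2, -⟩)
      · rcases hm with ⟨hlt, -⟩ | ⟨-, x, y, hx, hy, hadj, hnc, he⟩
        · have := (hP c hc).1; omega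
        · have hxc : x ≠ center := fun h' => hnc ⟨rfl, h'⟩
          have hmem := ((hP c hc).2 x (cellsL_complete x) y (cellsL_complete y)
            hx hy hadj hxc).2
          exact ih (Or.inr ⟨rfl, by rw [he]; exact hmem⟩)
      · exact Player.noConfusion h2
  | forced c hne hnowin hall ih =>
      rintro (⟨h2, -⟩ | ⟨-, hc⟩)
      · exact Player.noConfusion h2
      · obtain ⟨hge, x, -, y, -, hx, hy, hadj, hres⟩ := hQ c hc
        have mv : MoveR Player.X.other c (upd c x y Player.O) :=
          Or.inr ⟨hge, x, y, hx, hy, hadj,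
            ⟨by rintro ⟨h, -⟩; exact Player.noConfusion h, rfl⟩⟩
        rcases hres with h3 | hmem
        · exact hnowin _ mv h3
        · exact ih _ mv (Or.inl ⟨rfl, hmem⟩)

/-- In the center-restricted game, X cannot win from the Loop position:
if X refuses to leave the center, O can force a return to the Loop position. -/

theorem picaria_X_holds_center_cannot_win :
    ¬ WinningForRestricted Player.X (L, Player.X) := by
  intro h
  exact key _ h (Or.inl ⟨rfl, hLmem⟩)
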